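/- Let Q and R be real symmetric n×n matrices with −Q ∈ [q₁, q₂]·I, i.e. q₁ I ⪯ −Q ⪯ q₂ I, where q₂ ≥ q₁ > 0, and R positive semidefinite and rank-deficient (i.e. there exists a nonzero v with Rv = 0). Let λ > 0. Then the function ψ(α) = det((α+λ)(αI + Q) + R) has a root α > 0. -/

import Mathlib

/-!
Write `D(α) = (α + λ)(αI + Q) + R`. Testing against a null vector `v` of `R` gives
`vᵀ D(0) v = λ vᵀ Q v < 0`, while `D(q₂) = (q₂ + λ)(q₂ I + Q) + R ⪰ 0`. Positive semidefiniteness is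
a closed condition, so there is a least `α ∈ [0, q₂]` with `D(α) ⪰ 0`, and `α > 0`. Were `D(α)` nonsingular, it
would be positive definite, i.e. `D(α) ⪰ εI`; since `Q ⪯ 0`, `D` decreases at most at a bounded
rate in the Loewner order when `α` moves down, so `D` would stay positive semidefinite slightly
below `α`, contradicting minimality.
-/

open Matrix Filter Topology Set
open scoped ComplexOrder MatrixOrder

namespace Matrix

variable {ι 𝕜 : Type*} [Fintype ι] [RCLike 𝕜]

lemma PosDef.exists_pos_posSemidef_sub_smul_one [DecidableEq ι] {A : Matrix ι ι 𝕜}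
    (hA : A.PosDef) : ∃ ε > (0 : ℝ), (A - (ε : 𝕜) • 1).PosSemidef := by
  cases isEmpty_or_nonempty ι
  · exact ⟨1, one_pos, Subsingleton.elim 0 (A - _) ▸ .zero⟩
  obtain ⟨ε, hε, hle⟩ := (CFC.exists_pos_algebraMap_le_iff hA.isHermitian).mpr
    fun _ hx => hA.isStrictlyPositive.spectrum_pos hx
  exact ⟨ε, hε, by simpa [← le_iff, Algebra.algebraMap_eq_smul_one] using hle⟩

lemma isClosed_setOf_posSemidef {X : Type*} [TopologicalSpace X] {A : X → Matrix ι ι 𝕜}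
    (hA : Continuous A) (hA_herm : ∀ x, (A x).IsHermitian) :
    IsClosed {x | (A x).PosSemidef} := by
  have : {x | (A x).PosSemidef} = ⋂ w : ι → 𝕜, {x | 0 ≤ star w ⬝ᵥ A x *ᵥ w} := by
    ext x
    simpa [hA_herm x] using (posSemidef_iff_dotProduct_mulVec (M := A x))
  rw [this]
  exact isClosed_iInter fun w =>
    isClosed_le continuous_const (continuous_const.dotProduct (hA.matrix_mulVec continuous_const))

end Matrix

section QuadraticPencil

variable {ι : Type*} [DecidableEq ι] (lam : ℝ) (Q R : Matrix ι ι ℝ)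

def quadraticPencil (α : ℝ) : Matrix ι ι ℝ := (α + lam) • (α • 1 + Q) + R

lemma dotProduct_quadraticPencil_mulVec [Fintype ι] (α : ℝ) (w : ι → ℝ) :
    w ⬝ᵥ quadraticPencil lam Q R α *ᵥ w
      = (α + lam) * (α * (w ⬝ᵥ w) + w ⬝ᵥ Q *ᵥ w) + w ⬝ᵥ R *ᵥ w := by
  simp [quadraticPencil, add_mulVec, smul_mulVec, dotProduct_add, dotProduct_smul, mul_add]

variable {lam Q R}

lemma continuous_quadraticPencil : Continuous (quadraticPencil lam Q R) := by
  unfold quadraticPencil; fun_prop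

lemma isHermitian_quadraticPencil (hQ : Q.IsHermitian) (hR : R.IsHermitian) (α : ℝ) :
    (quadraticPencil lam Q R α).IsHermitian :=
  ((isHermitian_one.smul (.all α)).add hQ |>.smul (.all (α + lam))).add hR

variable [Fintype ι]

/- `D(t) - D(s) = (t - s) ((t + s + λ) I + Q) ⪯ (t - s)(t + s + λ) I` for `Q ⪯ 0` and `s < t`,
and this multiple of the identity tends to `0` as `s → t`. -/
lemma eventually_posSemidef_quadraticPencil (hQ : (-Q).PosSemidef) (hR : R.IsHermitian) {t : ℝ}
    (ht : (quadraticPencil lam Q R t).PosDef) :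
    ∀ᶠ s in 𝓝[<] t, (quadraticPencil lam Q R s).PosSemidef := by
  obtain ⟨ε, hε, hεt⟩ := ht.exists_pos_posSemidef_sub_smul_one
  have hsmall : ∀ᶠ s in 𝓝 t, (t - s) * (t + s + lam) < ε :=
    (by fun_prop : Continuous fun s => (t - s) * (t + s + lam)).continuousAt.eventually_lt
      continuousAt_const (by simpa using hε)
  filter_upwards [nhdsWithin_le_nhds hsmall, self_mem_nhdsWithin] with s hs hst
  refine .of_dotProduct_mulVec_nonneg (isHermitian_quadraticPencil (by simpa using hQ.1) hR s)
    fun w => ?_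
  have hεw := hεt.dotProduct_mulVec_nonneg w
  have hQw := hQ.dotProduct_mulVec_nonneg w
  have hww : 0 ≤ w ⬝ᵥ w := by simpa using dotProduct_self_star_nonneg w
  simp only [star_trivial, sub_mulVec, smul_mulVec, one_mulVec, dotProduct_sub, dotProduct_smul,
    neg_mulVec, dotProduct_neg, RCLike.ofReal_real_eq_id, id, smul_eq_mul,
    dotProduct_quadraticPencil_mulVec] at hεw hQw ⊢
  nlinarith [mul_nonneg (sub_nonneg.2 hs.le) hww,
    mul_nonneg (sub_nonneg.2 hst.le) hQw]

lemma exists_mem_Ioc_det_quadraticPencil_eq_zero (hQ : (-Q).PosSemidef) (hR : R.IsHermitian)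
    {a b : ℝ} (hab : a ≤ b) (ha : ¬ (quadraticPencil lam Q R a).PosSemidef)
    (hb : (quadraticPencil lam Q R b).PosSemidef) :
    ∃ t ∈ Ioc a b, (quadraticPencil lam Q R t).det = 0 := by
  set S := {t ∈ Icc a b | (quadraticPencil lam Q R t).PosSemidef}
  have hS_closed : IsClosed S := isClosed_Icc.inter <| isClosed_setOf_posSemidef
    continuous_quadraticPencil (isHermitian_quadraticPencil (by simpa using hQ.1) hR)
  have hS_bdd : BddBelow S := ⟨a, fun t ht => ht.1.1⟩
  have hS_inf : sInf S ∈ S := hS_closed.csInf_mem ⟨b, ⟨hab, le_rfl⟩, hb⟩ hS_bdd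
  have ha_lt : a < sInf S := hS_inf.1.1.lt_of_ne fun h => ha (h ▸ hS_inf.2)
  refine ⟨sInf S, ⟨ha_lt, hS_inf.1.2⟩, ?_⟩
  by_contra hdet
  obtain ⟨s, hs, has, hst⟩ := ((eventually_posSemidef_quadraticPencil hQ hR
    (hS_inf.2.posDef_iff_det_ne_zero.2 hdet)).and (Ioo_mem_nhdsLT ha_lt)).exists
  exact (csInf_le hS_bdd ⟨⟨has.le, hst.le.trans hS_inf.1.2⟩, hs⟩).not_gt hst

end QuadraticPencil

theorem exists_pos_root_of_negdef_Q_rank_deficient_R_general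
    (n : ℕ) (Q R : Matrix (Fin n) (Fin n) ℝ)
    (q₁ q₂ : ℝ) (hq₁ : 0 < q₁) (hq₁₂ : q₁ ≤ q₂)
    (hlow : ((-Q) - q₁ • (1 : Matrix (Fin n) (Fin n) ℝ)).PosSemidef)
    (hhigh : (q₂ • (1 : Matrix (Fin n) (Fin n) ℝ) - (-Q)).PosSemidef)
    (hRpsd : R.PosSemidef)
    (hRdef : ∃ v : Fin n → ℝ, v ≠ 0 ∧ R.mulVec v = 0)
    (lam : ℝ) (hlam : 0 < lam) :
    ∃ α : ℝ, 0 < α ∧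
      ((α + lam) • (α • (1 : Matrix (Fin n) (Fin n) ℝ) + Q) + R).det = 0 := by
  obtain ⟨v, hv, hRv⟩ := hRdef
  have hQ : (-Q).PosDef := by
    simpa using PosDef.posSemidef_add hlow (PosDef.one.smul hq₁)
  have h_zero : ¬ (quadraticPencil lam Q R 0).PosSemidef := fun h => by
    have hD := h.dotProduct_mulVec_nonneg v
    have hQv := hQ.dotProduct_mulVec_pos hv
    simp only [star_trivial, dotProduct_quadraticPencil_mulVec, hRv, neg_mulVec,
      dotProduct_neg, dotProduct_zero, zero_add] at hD hQv
    nlinarith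
  have h_q₂ : (quadraticPencil lam Q R q₂).PosSemidef := by
    rw [sub_neg_eq_add] at hhigh
    exact (hhigh.smul (by linarith : 0 ≤ q₂ + lam)).add hRpsd
  obtain ⟨α, ⟨hα, -⟩, hdet⟩ := exists_mem_Ioc_det_quadraticPencil_eq_zero hQ.posSemidef
    hRpsd.isHermitian (by linarith) h_zero h_q₂
  exact ⟨α, hα, hdet⟩

/-- For real symmetric `Q` with `q₁ I ⪯ -Q ⪯ q₂ I` (`q₂ ≥ q₁ > 0`),
`R` positive semidefinite and rank-deficient, and `λ > 0`, the function
`ψ(α) = det((α+λ)(αI+Q)+R)` has a root `α > 0`. -/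
theorem exists_pos_root_of_negdef_Q_rank_deficient_R
    (n : ℕ) (Q R : Matrix (Fin n) (Fin n) ℝ)
    (hQ : Qᵀ = Q) (hR : Rᵀ = R)
    (q₁ q₂ : ℝ) (hq₁ : 0 < q₁) (hq₁₂ : q₁ ≤ q₂)
    (hlow : ((-Q) - q₁ • (1 : Matrix (Fin n) (Fin n) ℝ)).PosSemidef)
    (hhigh : (q₂ • (1 : Matrix (Fin n) (Fin n) ℝ) - (-Q)).PosSemidef)
    (hRpsd : R.PosSemidef)
    (hRdef : ∃ v : Fin n → ℝ, v ≠ 0 ∧ R.mulVec v = 0)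
    (lam : ℝ) (hlam : 0 < lam) :
    ∃ α : ℝ, 0 < α ∧
      ((α + lam) • (α • (1 : Matrix (Fin n) (Fin n) ℝ) + Q) + R).det = 0 :=
  exists_pos_root_of_negdef_Q_rank_deficient_R_general n Q R q₁ q₂ hq₁ hq₁₂ hlow hhigh hRpsd hRdef
    lam hlam
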